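/- arXiv:1902.00208 — 3 statements merged into one kernel-verified Lean document; each statement's English description precedes it below -/
import Mathlib

section
/- If C ⊆ ℝⁿ is a rational polyhedral cone, then C ∩ ℤⁿ is a finitely generated additive submonoid of ℤⁿ (an affine semigroup), and it is pointed if and only if C is a pointed cone (contains no line). -/
/-!
The lattice points of the cone spanned by integer vectors `vᵢ` are generated by the finitely many
lattice points of the zonotope `{∑ cᵢ vᵢ | 0 ≤ cᵢ ≤ 1}`: from a lattice point `∑ cᵢ vᵢ` of the cone
subtract `∑ ⌊cᵢ⌋ vᵢ`. If `x` and `-x` both lie in the cone, then every generator occurring in `x`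
with a positive coefficient lies in the lineality space, since that space is a face; such a
generator `vᵢ` and its negative are then lattice points of the cone, so `vᵢ = 0` when the lattice
points form a pointed monoid. Conversely, the lattice points of a pointed cone form a pointed
monoid because `ℤⁿ → ℝⁿ` is injective.
-/

open Set Finset PointedCone

noncomputable abbrev Pi.intCastAddHom (ι : Type*) : (ι → ℤ) →+ (ι → ℝ) :=
  (Int.castAddHom ℝ).compLeft ι

theorem Pi.intCastAddHom_injective (ι : Type*) : Function.Injective (Pi.intCastAddHom ι) :=
  Int.cast_injective.comp_left

theorem Pi.norm_intCastAddHom {ι : Type*} [Fintype ι] (a : ι → ℤ) :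
    ‖Pi.intCastAddHom ι a‖ = ‖a‖ := by
  simp only [Pi.norm_def]
  -- the norm on `ℤ` is defined as the norm of the cast to `ℝ`
  congr 2

theorem AddSubmonoid.isPointed_iff_add_eq_zero {G : Type*} [AddGroup G] {M : AddSubmonoid G} :
    M.IsPointed ↔ ∀ a ∈ M, ∀ b ∈ M, a + b = 0 → a = 0 := by
  refine ⟨fun hM a ha b hb hab => hM a ha ?_, fun h a ha hna => h a ha (-a) hna (add_neg_cancel a)⟩
  rwa [← eq_neg_of_add_eq_zero_right hab]

namespace PointedCone

variable {R E α : Type*}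

theorem mem_hull_range_iff [Semiring R] [PartialOrder R] [IsOrderedRing R] [AddCommMonoid E]
    [Module R E] [Fintype α] {w : α → E} {x : E} :
    x ∈ hull R (range w) ↔ ∃ c : α → R, (∀ i, 0 ≤ c i) ∧ x = ∑ i, c i • w i := by
  rw [Submodule.mem_span_range_iff_exists_fun]
  constructor
  · rintro ⟨c, rfl⟩
    exact ⟨fun i => c i, fun i => (c i).2, rfl⟩
  · rintro ⟨c, hc, rfl⟩
    exact ⟨fun i => ⟨c i, hc i⟩, rfl⟩

theorem isPointed_hull_range [DivisionRing R] [LinearOrder R] [IsOrderedRing R] [AddCommGroup E]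
    [Module R E] [Fintype α] {w : α → E} (h : ∀ i, -w i ∈ hull R (range w) → w i = 0) :
    (hull R (range w)).toAddSubmonoid.IsPointed := by
  classical
  set K := hull R (range w)
  intro x hx hnx
  obtain ⟨c, hc, rfl⟩ := mem_hull_range_iff.1 hx
  refine Finset.sum_eq_zero fun i _ => ?_
  rcases (hc i).eq_or_lt with hci | hci
  · rw [← hci, zero_smul]
  have hw : ∀ j, w j ∈ K := fun j => subset_hull (mem_range_self j)
  have hrest : ∑ j ∈ univ.erase i, c j • w j ∈ K := sum_mem fun j _ => smul_mem _ (hc j) (hw j)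
  have hsplit : c i • w i + ∑ j ∈ univ.erase i, c j • w j ∈ K.lineal := by
    rw [add_sum_erase univ (fun j => c j • w j) (mem_univ i)]
    exact mem_lineal.2 ⟨hx, hnx⟩
  have hwi := (IsFaceOf.lineal K).mem_of_smul_add_mem (hw i) hrest hci hsplit
  rw [h i (mem_lineal.1 hwi).2, smul_zero]

variable {ι : Type*}

noncomputable def latticePoints (K : PointedCone ℝ (ι → ℝ)) : AddSubmonoid (ι → ℤ) :=
  K.toAddSubmonoid.comap (Pi.intCastAddHom ι)

theorem isPointed_latticePoints_iff_of_hull_range [Fintype α] (v : α → ι → ℤ) :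
    (latticePoints (hull ℝ (range (Pi.intCastAddHom ι ∘ v)))).IsPointed ↔
      (hull ℝ (range (Pi.intCastAddHom ι ∘ v))).toAddSubmonoid.IsPointed := by
  constructor
  · intro hL
    refine isPointed_hull_range fun i hi => ?_
    have hvi : v i ∈ latticePoints (hull ℝ (range (Pi.intCastAddHom ι ∘ v))) :=
      subset_hull (mem_range_self i)
    have hnvi : -v i ∈ latticePoints (hull ℝ (range (Pi.intCastAddHom ι ∘ v))) := by
      simpa [latticePoints] using hi
    simp [hL _ hvi hnvi]
  · intro hK a ha hna
    apply Pi.intCastAddHom_injective ι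
    rw [map_zero]
    exact hK _ ha (by simpa [latticePoints] using hna)

def zonotopeLatticePoints [Fintype α] (w : α → ι → ℝ) : Set (ι → ℤ) :=
  {a | ∃ c : α → ℝ, (∀ i, c i ∈ Set.Icc 0 1) ∧ Pi.intCastAddHom ι a = ∑ i, c i • w i}

theorem finite_zonotopeLatticePoints [Fintype α] [Fintype ι] (w : α → ι → ℝ) :
    (zonotopeLatticePoints w).Finite := by
  refine (isCompact_closedBall (0 : ι → ℤ) (∑ i, ‖w i‖)).finite_of_discrete.subset ?_
  rintro a ⟨c, hc, ha⟩
  rw [mem_closedBall_zero_iff, ← Pi.norm_intCastAddHom, ha]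
  calc ‖∑ i, c i • w i‖ ≤ ∑ i, ‖c i • w i‖ := norm_sum_le _ _
    _ ≤ ∑ i, ‖w i‖ := sum_le_sum fun i _ => by
      rw [norm_smul, Real.norm_of_nonneg (hc i).1]
      exact mul_le_of_le_one_left (norm_nonneg _) (hc i).2

theorem zonotopeLatticePoints_subset_latticePoints [Fintype α] (w : α → ι → ℝ) :
    zonotopeLatticePoints w ⊆ latticePoints (hull ℝ (range w)) := by
  rintro a ⟨c, hc, ha⟩
  exact mem_hull_range_iff.2 ⟨c, fun i => (hc i).1, ha⟩

theorem latticePoints_hull_range_le_closure [Fintype α] (v : α → ι → ℤ) :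
    latticePoints (hull ℝ (range (Pi.intCastAddHom ι ∘ v))) ≤
      AddSubmonoid.closure (zonotopeLatticePoints (Pi.intCastAddHom ι ∘ v)) := by
  classical
  set S := zonotopeLatticePoints (Pi.intCastAddHom ι ∘ v)
  intro a ha
  obtain ⟨c, hc, hac⟩ := mem_hull_range_iff.1 ha
  have hvS : ∀ i, v i ∈ S := fun i =>
    ⟨Pi.single i 1, fun j => by by_cases hj : j = i <;> simp [hj], by simp⟩
  have hfrac : a - ∑ i, ⌊c i⌋₊ • v i ∈ S := by
    refine ⟨fun i => c i - ⌊c i⌋₊, fun i => ⟨sub_nonneg.2 (Nat.floor_le (hc i)),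
      by linarith [Nat.lt_floor_add_one (c i)]⟩, ?_⟩
    simp only [map_sub, map_sum, map_nsmul, hac, sub_smul, sum_sub_distrib, Nat.cast_smul_eq_nsmul,
      Function.comp_apply]
  rw [← add_sub_cancel (∑ i, ⌊c i⌋₊ • v i) a]
  exact add_mem (sum_mem fun i _ => nsmul_mem (AddSubmonoid.subset_closure (hvS i)) _)
    (AddSubmonoid.subset_closure hfrac)

theorem fg_latticePoints_hull_range [Fintype α] [Fintype ι] (v : α → ι → ℤ) :
    (latticePoints (hull ℝ (range (Pi.intCastAddHom ι ∘ v)))).FG :=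
  (AddSubmonoid.fg_iff _).2 ⟨_, le_antisymm
    (AddSubmonoid.closure_le.2 (zonotopeLatticePoints_subset_latticePoints _))
    (latticePoints_hull_range_le_closure v).ge, finite_zonotopeLatticePoints _⟩

end PointedCone

/-- Gordan's lemma + pointedness transfer: if C ⊆ ℝⁿ is a rational
polyhedral cone (nonnegative hull of finitely many integer vectors), then C ∩ ℤⁿ is a
finitely generated additive submonoid of ℤⁿ, and it is pointed iff C contains no line. -/
theorem stmt1 (n m : ℕ) (v : Fin m → (Fin n → ℤ)) (C : Set (Fin n → ℝ))
    (hC : C = {x | ∃ c : Fin m → ℝ, (∀ i, 0 ≤ c i) ∧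
      x = ∑ i, c i • (fun j => (v i j : ℝ))}) :
    ∃ M : AddSubmonoid (Fin n → ℤ), M.FG ∧
      ((M : Set (Fin n → ℤ)) = {a : Fin n → ℤ | (fun j => (a j : ℝ)) ∈ C}) ∧
      ((∀ a ∈ M, ∀ b ∈ M, a + b = 0 → a = 0) ↔ (∀ x ∈ C, -x ∈ C → x = 0)) := by
  have hK : C = hull ℝ (range (Pi.intCastAddHom (Fin n) ∘ v)) := by
    ext x
    rw [hC, SetLike.mem_coe, mem_hull_range_iff]
    rfl
  subst hK
  refine ⟨latticePoints _, fg_latticePoints_hull_range v, rfl, ?_⟩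
  rw [← AddSubmonoid.isPointed_iff_add_eq_zero]
  exact isPointed_latticePoints_iff_of_hull_range v
end

section
/- Let F₁,…,F_m be homogeneous elements of K[S_Δ^h] and < a multigraded monomial order. Then there exists a multidegree d ∈ ℕʳ and homogeneous elements G₁,…,G_t in ⟨F₁,…,F_m⟩ ∩ K[S_Δ^h]_d such that {χ(G₁),…,χ(G_t)} is a Gröbner basis of the ideal ⟨χ(F₁),…,χ(F_m)⟩ ⊆ K[S_Δ] with respect to the associated monomial order. -/
/-!
The leading monomials of elements of `⟨χ(F₁),…,χ(F_m)⟩` lie in the finitely generated monoid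
`S_Δ`, the image of `S_Δ^h`. Pulling them back along a surjection `ℕ^k → S_Δ`, Dickson's lemma
gives finitely many of them dividing all the others inside `S_Δ`. Each is the leading monomial of
some `∑ hᵢ χ(Fᵢ)`. Since `(0, c) ∈ S_Δ^h` for every `c ∈ ℕʳ`, every `hᵢ` lifts to `K[S_Δ^h]` in
each sufficiently large multidegree, so for `d` large all `hᵢ` lift in degree `d - deg Fᵢ`
simultaneously, and `∑ Hᵢ Fᵢ` is a homogeneous element of degree `d` dehomogenizing to
`∑ hᵢ χ(Fᵢ)`.
-/

/-- The dehomogenization morphism χ : K[S_Δ^h] → K[S_Δ], x^(α,d) ↦ x^α. -/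
noncomputable def chi (K : Type) [Field K] (n r : ℕ) :
    AddMonoidAlgebra K ((Fin n → ℤ) × (Fin r → ℕ)) →
      AddMonoidAlgebra K (Fin n → ℤ) :=
  fun x => AddMonoidAlgebra.ofCoeff (Finsupp.mapDomain Prod.fst x.coeff)

open AddMonoidAlgebra Filter

theorem AddSubmonoid.FG.exists_finite_subset_forall_eq_add {M : Type*} [AddCommMonoid M]
    {P : AddSubmonoid M} (hP : P.FG) {A : Set M} (hA : A ⊆ P) :
    ∃ B ⊆ A, B.Finite ∧ ∀ a ∈ A, ∃ b ∈ B, ∃ c ∈ P, a = c + b := by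
  classical
  obtain ⟨T, rfl⟩ := hP
  let Φ : (↥(T : Set M) → ℕ) →+ M :=
    { toFun := fun x => ∑ i, x i • (i : M)
      map_zero' := by simp
      map_add' := fun x y => by simp [add_smul, Finset.sum_add_distrib] }
  have hΦ : ∀ x, Φ x ∈ AddSubmonoid.closure (T : Set M) :=
    fun x => AddSubmonoid.mem_closure_iff_of_fintype.2 ⟨x, rfl⟩
  refine ⟨Φ '' {x | Minimal (· ∈ Φ ⁻¹' A) x}, ?_, ?_, ?_⟩
  · rintro _ ⟨x, hx, rfl⟩
    exact hx.prop
  · exact (WellQuasiOrderedLE.finite_of_isAntichain (setOfPred_minimal_antichain _)).image Φ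
  · intro a ha
    obtain ⟨x, rfl⟩ := AddSubmonoid.mem_closure_iff_of_fintype.1 (hA ha)
    obtain ⟨y, hyx, hy⟩ :=
      (Set.isPWO_of_wellQuasiOrderedLE _).exists_le_minimal (show x ∈ Φ ⁻¹' A from ha)
    refine ⟨Φ y, ⟨y, hy, rfl⟩, Φ (x - y), hΦ _, ?_⟩
    rw [← map_add, tsub_add_cancel_of_le hyx]
    rfl

theorem AddSubmonoid.mk_zero_mem_of_forall_single_mem {M ι : Type*} [AddCommMonoid M]
    [Fintype ι] [DecidableEq ι] {S : AddSubmonoid (M × (ι → ℕ))}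
    (h : ∀ i, ((0 : M), Pi.single i 1) ∈ S) (c : ι → ℕ) : ((0 : M), c) ∈ S := by
  have hc : ((0 : M), c) = ∑ i, c i • ((0 : M), (Pi.single i 1 : ι → ℕ)) := by
    ext <;> simp [Prod.fst_sum, Prod.snd_sum, Pi.single_apply]
  rw [hc]
  exact S.sum_mem fun i _ => S.nsmul_mem (h i) _

theorem AddSubmonoid.eventually_mk_mem_of_mem_map_fst {M N : Type*} [AddCommMonoid M]
    [AddCommMonoid N] [Preorder N] [ExistsAddOfLE N] {S : AddSubmonoid (M × N)}
    (h0 : ∀ c, ((0 : M), c) ∈ S) {a : M} (ha : a ∈ S.map (AddMonoidHom.fst M N)) :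
    ∀ᶠ e in atTop, (a, e) ∈ S := by
  obtain ⟨⟨a, q⟩, hq, rfl⟩ := ha
  filter_upwards [eventually_ge_atTop q] with e hqe
  obtain ⟨c, rfl⟩ := exists_add_of_le hqe
  simpa using S.add_mem hq (h0 c)

namespace AddMonoidAlgebra

variable {R M N : Type*} [CommSemiring R]

theorem mul_mem_supported [AddMonoid M] {S : AddSubmonoid M} {x y : R[M]}
    (hx : x ∈ supported R R (S : Set M)) (hy : y ∈ supported R R (S : Set M)) :
    x * y ∈ supported R R (S : Set M) := by
  classical
  intro p hp
  obtain ⟨a, ha, b, hb, rfl⟩ := Finset.mem_add.1 (support_coeff_mul_subset x y hp)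
  exact S.add_mem (hx ha) (hy hb)

theorem mapDomain_mem_supported_map [AddMonoid M] [AddMonoid N] (f : M →+ N)
    {S : AddSubmonoid M} {x : R[M]} (hx : x ∈ supported R R (S : Set M)) :
    mapDomain f x ∈ supported R R (S.map f : Set N) := by
  classical
  intro p hp
  obtain ⟨a, ha, rfl⟩ := Finset.mem_image.1 (Finsupp.mapDomain_support hp)
  exact ⟨a, hx ha, rfl⟩

noncomputable def homogenize (e : N) (x : R[M]) : R[M × N] :=
  mapDomain (fun a => (a, e)) x

theorem mapDomain_fst_homogenize (e : N) (x : R[M]) :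
    mapDomain Prod.fst (homogenize e x) = x := by
  ext a
  simp [homogenize, mapDomain, ← Finsupp.mapDomain_comp, Function.comp_def]
  exact DFunLike.congr_fun Finsupp.mapDomain_id a

theorem homogenize_mem_gradeBy [AddMonoid M] [AddMonoid N] (e : N) (x : R[M]) :
    homogenize e x ∈ gradeBy R (AddMonoidHom.snd M N) e := by
  classical
  intro p hp
  obtain ⟨a, -, rfl⟩ := Finset.mem_image.1 (Finsupp.mapDomain_support hp)
  rfl

theorem eventually_homogenize_mem_supported [AddCommMonoid M] [AddCommMonoid N] [Preorder N]
    [ExistsAddOfLE N] {S : AddSubmonoid (M × N)} (h0 : ∀ c, ((0 : M), c) ∈ S) {x : R[M]}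
    (hx : x ∈ supported R R (S.map (AddMonoidHom.fst M N) : Set M)) :
    ∀ᶠ e in atTop, homogenize e x ∈ supported R R (S : Set (M × N)) := by
  classical
  filter_upwards [(eventually_all_finset x.coeff.support).2
    fun a ha => S.eventually_mk_mem_of_mem_map_fst h0 (hx ha)] with e he
  intro p hp
  obtain ⟨a, ha, rfl⟩ := Finset.mem_image.1 (Finsupp.mapDomain_support hp)
  exact he a ha

theorem exists_homogeneous_lift {σ ι κ : Type*} [Finite ι] [Fintype κ] [AddCommMonoid M]
    {S : AddSubmonoid (M × (σ → ℕ))} (h0 : ∀ c, ((0 : M), c) ∈ S)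
    {F : κ → R[M × (σ → ℕ)]} {dF : κ → σ → ℕ}
    (hF : ∀ i, F i ∈ gradeBy R (AddMonoidHom.snd M (σ → ℕ)) (dF i)) (h : ι → κ → R[M])
    (hh : ∀ j i, h j i ∈ supported R R (S.map (AddMonoidHom.fst M (σ → ℕ)) : Set M)) :
    ∃ (d : σ → ℕ) (H : ι → κ → R[M × (σ → ℕ)]), ∀ j,
      (∀ i, H j i ∈ supported R R (S : Set (M × (σ → ℕ)))) ∧
      ∑ i, H j i * F i ∈ gradeBy R (AddMonoidHom.snd M (σ → ℕ)) d ∧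
      mapDomainRingHom R (AddMonoidHom.fst M (σ → ℕ)) (∑ i, H j i * F i) =
        ∑ i, h j i * mapDomainRingHom R (AddMonoidHom.fst M (σ → ℕ)) (F i) := by
  obtain ⟨e, he⟩ := (eventually_all.2 fun j => eventually_all.2 fun i =>
    eventually_homogenize_mem_supported h0 (hh j i)).exists_forall_of_atTop
  set d := e + ∑ i, dF i
  have hdF : ∀ i, e + dF i ≤ d := fun i =>
    add_le_add_right (Finset.single_le_sum (fun _ _ => zero_le) (Finset.mem_univ i)) e
  refine ⟨d, fun j i => homogenize (d - dF i) (h j i), fun j =>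
    ⟨fun i => he _ (le_tsub_of_add_le_right (hdF i)) j i, Submodule.sum_mem _ fun i _ => ?_, ?_⟩⟩
  · have := SetLike.mul_mem_graded (homogenize_mem_gradeBy (d - dF i) (h j i)) (hF i)
    rwa [tsub_add_cancel_of_le (le_of_add_le_right (hdF i))] at this
  · simp only [map_sum, map_mul, mapDomainRingHom_apply, AddMonoidHom.coe_fst,
      mapDomain_fst_homogenize]

end AddMonoidAlgebra

def IsLeadingMonomial {R M : Type*} [Semiring R] (lt : M → M → Prop) (g : R[M]) (a : M) :
    Prop :=
  a ∈ g.coeff.support ∧ ∀ x ∈ g.coeff.support, x = a ∨ lt x a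

theorem stmt8_general (K : Type) [Field K] (n r m : ℕ)
    (S : AddSubmonoid ((Fin n → ℤ) × (Fin r → ℕ))) (hSfg : S.FG)
    (hS0 : ∀ i : Fin r, ((0 : Fin n → ℤ), Pi.single i 1) ∈ S)
    (ltΔ : (Fin n → ℤ) → (Fin n → ℤ) → Prop)
    (F : Fin m → AddMonoidAlgebra K ((Fin n → ℤ) × (Fin r → ℕ)))
    (dF : Fin m → (Fin r → ℕ))
    (hFhom : ∀ i, ∀ p ∈ (F i).coeff.support, p.2 = dF i)
    (hFS : ∀ i, ∀ p ∈ (F i).coeff.support, p ∈ S) :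
    ∃ (d : Fin r → ℕ) (t : ℕ)
      (G : Fin t → AddMonoidAlgebra K ((Fin n → ℤ) × (Fin r → ℕ))),
      (∀ j, ∀ p ∈ (G j).coeff.support, p.2 = d) ∧
      (∀ j, ∀ p ∈ (G j).coeff.support, p ∈ S) ∧
      (∀ j, ∃ H : Fin m → AddMonoidAlgebra K ((Fin n → ℤ) × (Fin r → ℕ)),
        (∀ i, ∀ p ∈ (H i).coeff.support, p ∈ S) ∧ G j = ∑ i, H i * F i) ∧
      -- Gröbner basis property of the dehomogenizations
      (∀ g : AddMonoidAlgebra K (Fin n → ℤ),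
        (∃ h : Fin m → AddMonoidAlgebra K (Fin n → ℤ),
          (∀ i, ∀ a ∈ (h i).coeff.support, ∃ p ∈ S, Prod.fst p = a) ∧
          g = ∑ i, h i * chi K n r (F i)) →
        g ≠ 0 →
        ∀ mg, (mg ∈ g.coeff.support ∧ ∀ a ∈ g.coeff.support, a = mg ∨ ltΔ a mg) →
          ∃ (j : Fin t) (mj : Fin n → ℤ),
            (mj ∈ (chi K n r (G j)).coeff.support ∧
              ∀ a ∈ (chi K n r (G j)).coeff.support, a = mj ∨ ltΔ a mj) ∧
            ∃ γ : Fin n → ℤ, (∃ p ∈ S, Prod.fst p = γ) ∧ mg = γ + mj) := by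
  classical
  set P := S.map (AddMonoidHom.fst (Fin n → ℤ) (Fin r → ℕ))
  set A := {a | ∃ h : Fin m → K[Fin n → ℤ], (∀ i, h i ∈ supported K K (P : Set (Fin n → ℤ))) ∧
    IsLeadingMonomial ltΔ (∑ i, h i * chi K n r (F i)) a}
  have hAP : A ⊆ P := fun a ⟨h, hh, ha, _⟩ => (Submodule.sum_mem _ fun i _ =>
    mul_mem_supported (hh i) (mapDomain_mem_supported_map _ (hFS i))) ha
  obtain ⟨B, hBA, hB, hcover⟩ := (hSfg.map _).exists_finite_subset_forall_eq_add hAP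
  obtain ⟨t, b, -, rfl⟩ := hB.fin_param
  choose h hhP hlead using fun j => hBA ⟨j, rfl⟩
  obtain ⟨d, H, hH⟩ :=
    exists_homogeneous_lift (S.mk_zero_mem_of_forall_single_mem hS0) (F := F) hFhom h hhP
  have hGS : ∀ j, ∑ i, H j i * F i ∈ supported K K (S : Set _) := fun j =>
    Submodule.sum_mem _ fun i _ => mul_mem_supported ((hH j).1 i) (hFS i)
  have hchiG : ∀ j, chi K n r (∑ i, H j i * F i) = ∑ i, h j i * chi K n r (F i) :=
    fun j => (hH j).2.2
  refine ⟨d, t, fun j => ∑ i, H j i * F i, fun j => (hH j).2.1, hGS,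
    fun j => ⟨H j, (hH j).1, rfl⟩, ?_⟩
  rintro g ⟨h', hh', rfl⟩ - mg hmg
  obtain ⟨_, ⟨j, rfl⟩, c, hc, rfl⟩ := hcover mg ⟨h', hh', hmg⟩
  exact ⟨j, b j, hchiG j ▸ hlead j, c, hc, rfl⟩

/-- given homogeneous F₁,…,F_m in the multigraded Cayley semigroup algebra
K[S_Δ^h] and a multigraded monomial order, there exists a multidegree d and homogeneous
elements G₁,…,G_t of degree d in the ideal ⟨F₁,…,F_m⟩ whose dehomogenizations form a
Gröbner basis of ⟨χ(F₁),…,χ(F_m)⟩ ⊆ K[S_Δ] for the associated order. -/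
theorem stmt8 (K : Type) [Field K] (n r m : ℕ)
    (S : AddSubmonoid ((Fin n → ℤ) × (Fin r → ℕ))) (hSfg : S.FG)
    (hS0 : ∀ i : Fin r, ((0 : Fin n → ℤ), Pi.single i 1) ∈ S)
    (lt : ((Fin n → ℤ) × (Fin r → ℕ)) → ((Fin n → ℤ) × (Fin r → ℕ)) → Prop)
    (ltΔ : (Fin n → ℤ) → (Fin n → ℤ) → Prop)
    (lth : (Fin r → ℕ) → (Fin r → ℕ) → Prop)
    (hmg : ∀ p q, lt p q ↔ (lth p.2 q.2 ∨ (p.2 = q.2 ∧ ltΔ p.1 q.1)))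
    -- monomial order axioms on S
    (htotal : ∀ a ∈ S, ∀ b ∈ S, a = b ∨ lt a b ∨ lt b a)
    (hirrefl : ∀ a, ¬ lt a a)
    (htrans : ∀ a b c, lt a b → lt b c → lt a c)
    (hmin : ∀ a ∈ S, a ≠ (0 : ((Fin n → ℤ) × (Fin r → ℕ))) → lt 0 a)
    (hadd : ∀ a ∈ S, ∀ b ∈ S, ∀ c ∈ S, lt a b → lt (a + c) (b + c))
    (F : Fin m → AddMonoidAlgebra K ((Fin n → ℤ) × (Fin r → ℕ)))
    (dF : Fin m → (Fin r → ℕ))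
    (hFhom : ∀ i, ∀ p ∈ (F i).coeff.support, p.2 = dF i)
    (hFS : ∀ i, ∀ p ∈ (F i).coeff.support, p ∈ S) :
    ∃ (d : Fin r → ℕ) (t : ℕ)
      (G : Fin t → AddMonoidAlgebra K ((Fin n → ℤ) × (Fin r → ℕ))),
      (∀ j, ∀ p ∈ (G j).coeff.support, p.2 = d) ∧
      (∀ j, ∀ p ∈ (G j).coeff.support, p ∈ S) ∧
      (∀ j, ∃ H : Fin m → AddMonoidAlgebra K ((Fin n → ℤ) × (Fin r → ℕ)),
        (∀ i, ∀ p ∈ (H i).coeff.support, p ∈ S) ∧ G j = ∑ i, H i * F i) ∧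
      -- Gröbner basis property of the dehomogenizations
      (∀ g : AddMonoidAlgebra K (Fin n → ℤ),
        (∃ h : Fin m → AddMonoidAlgebra K (Fin n → ℤ),
          (∀ i, ∀ a ∈ (h i).coeff.support, ∃ p ∈ S, Prod.fst p = a) ∧
          g = ∑ i, h i * chi K n r (F i)) →
        g ≠ 0 →
        ∀ mg, (mg ∈ g.coeff.support ∧ ∀ a ∈ g.coeff.support, a = mg ∨ ltΔ a mg) →
          ∃ (j : Fin t) (mj : Fin n → ℤ),
            (mj ∈ (chi K n r (G j)).coeff.support ∧
              ∀ a ∈ (chi K n r (G j)).coeff.support, a = mj ∨ ltΔ a mj) ∧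
            ∃ γ : Fin n → ℤ, (∃ p ∈ S, Prod.fst p = γ) ∧ mg = γ + mj) :=
  stmt8_general K n r m S hSfg hS0 ltΔ F dF hFhom hFS
end

section
/- (Koszul F5 criterion) Let F₁,…,F_k ∈ K[S_Δ^h] be homogeneous of multidegrees d₁,…,d_k and d ≥ d_k. If x^(α, d−d_k) is the leading monomial of some element of ⟨F₁,…,F_{k−1}⟩_{d−d_k}, then the polynomial x^(α, d−d_k)·F_k is a K-linear combination of elements of ⟨F₁,…,F_{k−1}⟩_d together with polynomials x^(β, d−d_k)·F_k where x^(β,d−d_k) ranges over monomials of K[S_Δ^h]_{d−d_k} smaller than x^(α,d−d_k). -/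
/-- `m` is the leading monomial of `f` with respect to the monomial order `lt`. -/
def IsLM {K : Type} [Field K] {M : Type} [AddCommMonoid M]
    (lt : M → M → Prop) (f : AddMonoidAlgebra K M) (m : M) : Prop :=
  m ∈ f.coeff.support ∧ ∀ m' ∈ f.coeff.support, m' = m ∨ lt m' m

/-!
Write the leading term of `G ∈ ⟨F₁,…,F_{k−1}⟩_{d−d_k}` as `c · x^(α,d−d_k)` with `c ≠ 0`. Then
`G · F_k` lies in `⟨F₁,…,F_{k−1}⟩_d`, and expanding `G` into its terms expresses
`c · x^(α,d−d_k) · F_k` as `G · F_k` minus multiples of `x^(β,d−d_k) · F_k` over the remaining,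
strictly smaller, monomials `x^(β,d−d_k)` of `G`.
-/

open AddMonoidAlgebra

namespace AddMonoidAlgebra

variable {K M : Type}

theorem mul_mem_supported_addSubmonoid [Semiring K] [AddMonoid M] {S : AddSubmonoid M}
    {x y : K[M]} (hx : x ∈ supported K K (S : Set M)) (hy : y ∈ supported K K (S : Set M)) :
    x * y ∈ supported K K (S : Set M) := by
  classical
  intro p hp
  obtain ⟨a, ha, b, hb, rfl⟩ := Finset.mem_add.mp (support_coeff_mul_subset x y hp)
  exact S.add_mem (hx ha) (hy hb)

theorem mul_eq_sum_smul_single_mul [CommSemiring K] [AddMonoid M] (G F : K[M]) :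
    G * F = ∑ m ∈ G.coeff.support, G.coeff m • (single m 1 * F) := by
  conv_lhs => rw [← sum_coeff_single G]
  rw [Finsupp.sum, Finset.sum_mul]
  refine Finset.sum_congr rfl fun m _ => ?_
  rw [← smul_mul_assoc, smul_single', mul_one]

theorem single_mul_mem_span_of_isLM [Field K] [AddCommMonoid M] {lt : M → M → Prop}
    {G : K[M]} {m₀ : M} (hG : IsLM lt G m₀) (F : K[M]) :
    single m₀ 1 * F ∈ Submodule.span K
      (insert (G * F) {g | ∃ m ∈ G.coeff.support, lt m m₀ ∧ g = single m 1 * F}) := by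
  classical
  obtain ⟨hm₀, hmax⟩ := hG
  have hsolve : single m₀ 1 * F = (G.coeff m₀)⁻¹ • (G * F -
      ∑ m ∈ G.coeff.support.erase m₀, G.coeff m • (single m 1 * F)) := by
    rw [mul_eq_sum_smul_single_mul G, ← Finset.add_sum_erase _ _ hm₀, add_sub_cancel_right,
      smul_smul, inv_mul_cancel₀ (Finsupp.mem_support_iff.mp hm₀), one_smul]
  rw [hsolve]
  refine Submodule.smul_mem _ _ (Submodule.sub_mem _ (Submodule.subset_span (.inl rfl)) ?_)
  refine Submodule.sum_mem _ fun m hm => Submodule.smul_mem _ _ (Submodule.subset_span (.inr ?_))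
  obtain ⟨hne, hmG⟩ := Finset.mem_erase.mp hm
  exact ⟨m, hmG, (hmax m hmG).resolve_left hne, rfl⟩

end AddMonoidAlgebra

theorem stmt10_general (K : Type) [Field K] (n r k : ℕ)
    (S : AddSubmonoid ((Fin n → ℤ) × (Fin r → ℕ)))
    (lt : ((Fin n → ℤ) × (Fin r → ℕ)) → ((Fin n → ℤ) × (Fin r → ℕ)) → Prop)
    -- F₁, …, F_{k-1}
    (F : Fin k → AddMonoidAlgebra K ((Fin n → ℤ) × (Fin r → ℕ)))
    (hFS : ∀ i, ∀ p ∈ (F i).coeff.support, p ∈ S)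
    -- F_k of multidegree d_k
    (Fk : AddMonoidAlgebra K ((Fin n → ℤ) × (Fin r → ℕ))) (dk : Fin r → ℕ)
    (hFkhom : ∀ p ∈ Fk.coeff.support, p.2 = dk)
    (hFkS : ∀ p ∈ Fk.coeff.support, p ∈ S)
    -- d ≥ d_k coordinatewise, with e = d − d_k
    (e d : Fin r → ℕ) (hd : d = e + dk)
    (α : Fin n → ℤ)
    -- x^(α,e) is a leading monomial of ⟨F₁,…,F_{k−1}⟩_{d−d_k}
    (hLM : ∃ G : AddMonoidAlgebra K ((Fin n → ℤ) × (Fin r → ℕ)),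
      G ≠ 0 ∧ (∀ p ∈ G.coeff.support, p.2 = e) ∧
      (∃ H : Fin k → AddMonoidAlgebra K ((Fin n → ℤ) × (Fin r → ℕ)),
        (∀ i, ∀ p ∈ (H i).coeff.support, p ∈ S) ∧ G = ∑ i, H i * F i) ∧
      IsLM lt G ((α, e) : (Fin n → ℤ) × (Fin r → ℕ))) :
    AddMonoidAlgebra.single ((α, e) : (Fin n → ℤ) × (Fin r → ℕ)) (1 : K) * Fk ∈
      Submodule.span K
        ({g : AddMonoidAlgebra K ((Fin n → ℤ) × (Fin r → ℕ)) |
            (∀ p ∈ g.coeff.support, p.2 = d) ∧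
            ∃ H : Fin k → AddMonoidAlgebra K ((Fin n → ℤ) × (Fin r → ℕ)),
              (∀ i, ∀ p ∈ (H i).coeff.support, p ∈ S) ∧ g = ∑ i, H i * F i} ∪
          {g | ∃ β : Fin n → ℤ, (β, e) ∈ S ∧
            lt ((β, e) : (Fin n → ℤ) × (Fin r → ℕ)) ((α, e)) ∧
            g = AddMonoidAlgebra.single ((β, e) : (Fin n → ℤ) × (Fin r → ℕ)) (1 : K) * Fk}) := by
  obtain ⟨G, -, hGe, ⟨H, hHS, rfl⟩, hLM⟩ := hLM
  have hGS : ∑ i, H i * F i ∈ supported K K (S : Set _) :=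
    Submodule.sum_mem _ fun i _ => mul_mem_supported_addSubmonoid (hHS i) (hFS i)
  refine Submodule.span_mono (Set.insert_subset ?_ ?_) (single_mul_mem_span_of_isLM hLM Fk)
  · have hdeg := SetLike.mul_mem_graded (A := gradeBy K (AddMonoidHom.snd _ (Fin r → ℕ)))
      (show _ ∈ gradeBy K _ e from hGe) (show Fk ∈ gradeBy K _ dk from hFkhom)
    refine .inl ⟨hd ▸ hdeg, fun i => Fk * H i,
      fun i => mul_mem_supported_addSubmonoid hFkS (hHS i), ?_⟩
    simp only [Finset.sum_mul, mul_right_comm _ (F _) Fk, mul_comm (H _) Fk]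
  · rintro _ ⟨m, hmG, hlt, rfl⟩
    obtain ⟨β, e'⟩ := m
    obtain rfl : e' = e := hGe _ hmG
    exact .inr ⟨β, hGS hmG, hlt, rfl⟩

/-- Koszul F5 criterion: if x^(α,d−d_k) is the leading monomial of some
element of ⟨F₁,…,F_{k−1}⟩_{d−d_k}, then x^(α,d−d_k)·F_k is a K-linear combination of
elements of ⟨F₁,…,F_{k−1}⟩_d and of products x^(β,d−d_k)·F_k with x^(β,d−d_k) smaller
than x^(α,d−d_k). -/
theorem stmt10 (K : Type) [Field K] (n r k : ℕ)
    (S : AddSubmonoid ((Fin n → ℤ) × (Fin r → ℕ))) (hSfg : S.FG)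
    (lt : ((Fin n → ℤ) × (Fin r → ℕ)) → ((Fin n → ℤ) × (Fin r → ℕ)) → Prop)
    (htotal : ∀ a ∈ S, ∀ b ∈ S, a = b ∨ lt a b ∨ lt b a)
    (hirrefl : ∀ a, ¬ lt a a)
    (htrans : ∀ a b c, lt a b → lt b c → lt a c)
    (hmin : ∀ a ∈ S, a ≠ (0 : ((Fin n → ℤ) × (Fin r → ℕ))) → lt 0 a)
    (hadd : ∀ a ∈ S, ∀ b ∈ S, ∀ c ∈ S, lt a b → lt (a + c) (b + c))
    -- F₁, …, F_{k-1}
    (F : Fin k → AddMonoidAlgebra K ((Fin n → ℤ) × (Fin r → ℕ)))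
    (dF : Fin k → (Fin r → ℕ))
    (hFhom : ∀ i, ∀ p ∈ (F i).coeff.support, p.2 = dF i)
    (hFS : ∀ i, ∀ p ∈ (F i).coeff.support, p ∈ S)
    -- F_k of multidegree d_k
    (Fk : AddMonoidAlgebra K ((Fin n → ℤ) × (Fin r → ℕ))) (dk : Fin r → ℕ)
    (hFkhom : ∀ p ∈ Fk.coeff.support, p.2 = dk)
    (hFkS : ∀ p ∈ Fk.coeff.support, p ∈ S)
    -- d ≥ d_k coordinatewise, with e = d − d_k
    (e d : Fin r → ℕ) (hd : d = e + dk)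
    (α : Fin n → ℤ) (hαS : (α, e) ∈ S)
    -- x^(α,e) is a leading monomial of ⟨F₁,…,F_{k−1}⟩_{d−d_k}
    (hLM : ∃ G : AddMonoidAlgebra K ((Fin n → ℤ) × (Fin r → ℕ)),
      G ≠ 0 ∧ (∀ p ∈ G.coeff.support, p.2 = e) ∧
      (∃ H : Fin k → AddMonoidAlgebra K ((Fin n → ℤ) × (Fin r → ℕ)),
        (∀ i, ∀ p ∈ (H i).coeff.support, p ∈ S) ∧ G = ∑ i, H i * F i) ∧
      IsLM lt G ((α, e) : (Fin n → ℤ) × (Fin r → ℕ))) :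
    AddMonoidAlgebra.single ((α, e) : (Fin n → ℤ) × (Fin r → ℕ)) (1 : K) * Fk ∈
      Submodule.span K
        ({g : AddMonoidAlgebra K ((Fin n → ℤ) × (Fin r → ℕ)) |
            (∀ p ∈ g.coeff.support, p.2 = d) ∧
            ∃ H : Fin k → AddMonoidAlgebra K ((Fin n → ℤ) × (Fin r → ℕ)),
              (∀ i, ∀ p ∈ (H i).coeff.support, p ∈ S) ∧ g = ∑ i, H i * F i} ∪
          {g | ∃ β : Fin n → ℤ, (β, e) ∈ S ∧
            lt ((β, e) : (Fin n → ℤ) × (Fin r → ℕ)) ((α, e)) ∧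
            g = AddMonoidAlgebra.single ((β, e) : (Fin n → ℤ) × (Fin r → ℕ)) (1 : K) * Fk}) :=
  stmt10_general K n r k S lt F hFS Fk dk hFkhom hFkS e d hd α hLM
end
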